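/- Let κ = 1 + √2 and ω ∈ ℝ. If (θ0, θ1, θ2, θ3, ζ) ∈ ℝ⁵ is an equilibrium of the minimal frequency-spiral model with parameter ω and θ1 = −θ0, then sin ζ = cos ζ (i.e., ζ ≡ π/4 modulo π). (This underlies the claim that, up to rotations, the equilibrium with θ0 = −θ1 and θ2 = −θ3 at ω = 0 has ζ = π/4.) -/

import Mathlib

/- With `θ1 = -θ0` the first two equilibrium equations read `sin (ζ - θ0) = κ sin θ0` and
`cos (ζ + θ0) = κ sin θ0`, so `sin (ζ - θ0) = cos (ζ + θ0)`, which factors as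
`(sin ζ - cos ζ) (cos θ0 + sin θ0) = 0`. The second factor cannot vanish: then
`sin θ0 = -cos θ0 ≠ 0` and the first equation forces `sin ζ + cos ζ = -κ`, impossible since
`|sin ζ + cos ζ| ≤ √2 < κ`. -/

open Real

/-- An equilibrium of the minimal frequency-spiral model with parameter `ω` and
`κ = 1 + √2`: all five right-hand sides of the ODE system vanish. -/
def IsMinimalSpiralEquilibrium (ω θ0 θ1 θ2 θ3 ζ : ℝ) : Prop :=
  Real.sin (ζ - θ0) - (1 + Real.sqrt 2) * Real.sin θ0 = 0 ∧
  Real.sin (ζ - θ1 - Real.pi / 2) - (1 + Real.sqrt 2) * Real.sin θ1 = 0 ∧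
  Real.sin (ζ - θ2 - Real.pi) - (1 + Real.sqrt 2) * Real.sin θ2 = 0 ∧
  Real.sin (ζ - θ3 - 3 * Real.pi / 2) - (1 + Real.sqrt 2) * Real.sin θ3 = 0 ∧
  ω - Real.sin (ζ - θ0) - Real.sin (ζ - θ1 - Real.pi / 2)
    - Real.sin (ζ - θ2 - Real.pi) - Real.sin (ζ - θ3 - 3 * Real.pi / 2) = 0

namespace Real

theorem sin_sub_sub_cos_add (x y : ℝ) :
    sin (x - y) - cos (x + y) = (sin x - cos x) * (cos y + sin y) := by
  rw [sin_sub, cos_add]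
  ring

theorem abs_sin_add_cos_le_sqrt_two (x : ℝ) : |sin x + cos x| ≤ √2 :=
  abs_le_sqrt <| by nlinarith [sin_sq_add_cos_sq x, sq_nonneg (sin x - cos x)]

theorem sin_ne_zero_of_cos_add_sin_eq_zero {y : ℝ} (h : cos y + sin y = 0) : sin y ≠ 0 := by
  intro hs
  have := sin_sq_add_cos_sq y
  simp_all

theorem cos_add_sin_ne_zero_of_sin_sub_eq_mul_sin {x y κ : ℝ} (hκ : √2 < κ)
    (h : sin (x - y) = κ * sin y) : cos y + sin y ≠ 0 := by
  intro hy
  have hsum : sin y * (sin x + cos x + κ) = 0 := by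
    rw [sin_sub] at h
    linear_combination -h + sin x * hy
  have hsum' : sin x + cos x = -κ := by
    linarith [(mul_eq_zero.mp hsum).resolve_left (sin_ne_zero_of_cos_add_sin_eq_zero hy)]
  linarith [neg_abs_le (sin x + cos x), abs_sin_add_cos_le_sqrt_two x]

end Real

theorem IsMinimalSpiralEquilibrium.sin_sub_eq_mul_sin {ω θ0 θ1 θ2 θ3 ζ : ℝ}
    (h : IsMinimalSpiralEquilibrium ω θ0 θ1 θ2 θ3 ζ) :
    sin (ζ - θ0) = (1 + √2) * sin θ0 :=
  sub_eq_zero.mp h.1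

theorem IsMinimalSpiralEquilibrium.cos_add_eq_mul_sin_of_antisymm {ω θ0 θ1 θ2 θ3 ζ : ℝ}
    (h : IsMinimalSpiralEquilibrium ω θ0 θ1 θ2 θ3 ζ) (hsym : θ1 = -θ0) :
    cos (ζ + θ0) = (1 + √2) * sin θ0 := by
  have h2 := h.2.1
  rw [hsym, show ζ - -θ0 - π / 2 = (ζ + θ0) - π / 2 by ring, sin_sub_pi_div_two, sin_neg] at h2
  linarith

/-- If `(θ0, θ1, θ2, θ3, ζ)` is an equilibrium of the minimal frequency-spiral model
(`κ = 1 + √2`) with `θ1 = −θ0`, then `sin ζ = cos ζ`, i.e. `ζ ≡ π/4` modulo `π`. -/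
theorem minimalSpiral_equilibrium_zeta_pi_quarter (ω θ0 θ1 θ2 θ3 ζ : ℝ)
    (h : IsMinimalSpiralEquilibrium ω θ0 θ1 θ2 θ3 ζ) (hsym : θ1 = -θ0) :
    Real.sin ζ = Real.cos ζ := by
  have h1 := h.sin_sub_eq_mul_sin
  have hfactor : (sin ζ - cos ζ) * (cos θ0 + sin θ0) = 0 := by
    rw [← sin_sub_sub_cos_add, h1, h.cos_add_eq_mul_sin_of_antisymm hsym, sub_self]
  have hθ0 := cos_add_sin_ne_zero_of_sin_sub_eq_mul_sin (lt_one_add _) h1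
  exact sub_eq_zero.mp ((mul_eq_zero.mp hfactor).resolve_right hθ0)
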